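/- arXiv:1409.4271 — 2 statements merged into one kernel-verified Lean document; each statement's English description precedes it below -/
import Mathlib

section
/- For any x ∈ ℝ^n and weight vector w in the monotone non-negative cone, w̄ ‖x‖_1 ≤ Ω_w(x) ≤ w_1 ‖x‖_1, where w̄ = (Σ_i w_i)/n is the average weight. -/
open Finset

/-- The vector of absolute values of `x`, sorted in non-increasing order. -/
noncomputable def absSorted {n : ℕ} (x : Fin n → ℝ) : Fin n → ℝ :=
  fun i => |x (Tuple.sort (fun j => -|x j|) i)|

/-- The ordered weighted ℓ₁ norm `Ω_w(x) = ∑ i, w i * |x|_[i]`. -/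
noncomputable def owl {n : ℕ} (w x : Fin n → ℝ) : ℝ := ∑ i, w i * absSorted x i

/-! Sorting `|x|` is a permutation, so it preserves the ℓ₁ norm; both bounds then compare
`∑ i, w i * |x|_[i]` with `∑ i, |x|_[i]`. The upper bound is `w i ≤ w 0` termwise, the lower
bound is Chebyshev's sum inequality for the two similarly ordered sequences `w` and `|x|_[·]`. -/

variable {n : ℕ}

theorem absSorted_antitone (x : Fin n → ℝ) : Antitone (absSorted x) := fun _ _ hij =>
  neg_le_neg_iff.mp (Tuple.monotone_sort (fun j => -|x j|) hij)

theorem sum_absSorted (x : Fin n → ℝ) : ∑ i, absSorted x i = ∑ i, |x i| :=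
  Equiv.sum_comp (Tuple.sort fun j => -|x j|) fun i => |x i|

theorem owl_le_mul_sum_abs (hn : 0 < n) {w : Fin n → ℝ} (hw : Antitone w) (x : Fin n → ℝ) :
    owl w x ≤ w ⟨0, hn⟩ * ∑ i, |x i| := by
  rw [← sum_absSorted, mul_sum]
  exact sum_le_sum fun i _ => mul_le_mul_of_nonneg_right (hw (Nat.zero_le i.val)) (abs_nonneg _)

theorem sum_div_card_mul_sum_abs_le_owl {w : Fin n → ℝ} (hw : Antitone w) (x : Fin n → ℝ) :
    (∑ i, w i) / n * ∑ i, |x i| ≤ owl w x := by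
  rcases Nat.eq_zero_or_pos n with rfl | hn
  · simp [owl]
  have chebyshev : (∑ i, w i) * ∑ i, |x i| ≤ n * owl w x := by
    simpa [owl, sum_absSorted] using (hw.monovary (absSorted_antitone x)).sum_mul_sum_le_card_mul_sum
  rw [div_mul_eq_mul_div, div_le_iff₀ (Nat.cast_pos.mpr hn)]
  linarith

theorem owl_l1_bounds_general {n : ℕ} (hn : 0 < n) (w : Fin n → ℝ) (hmono : Antitone w)
    (x : Fin n → ℝ) :
    ((∑ i, w i) / n) * (∑ i, |x i|) ≤ owl w x ∧
    owl w x ≤ w ⟨0, hn⟩ * (∑ i, |x i|) :=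
  ⟨sum_div_card_mul_sum_abs_le_owl hmono x, owl_le_mul_sum_abs hn hmono x⟩

/-- wbar * l1-norm of x <= Omega_w(x) <= w_1 * l1-norm of x, where wbar is the average weight. -/
theorem owl_l1_bounds {n : ℕ} (hn : 0 < n) (w : Fin n → ℝ) (hmono : Antitone w)
    (hnonneg : ∀ i, 0 ≤ w i) (x : Fin n → ℝ) :
    ((∑ i, w i) / n) * (∑ i, |x i|) ≤ owl w x ∧
    owl w x ≤ w ⟨0, hn⟩ * (∑ i, |x i|) :=
  owl_l1_bounds_general hn w hmono x
end

section
/- For v with Ω_w(v) > ε, the function g(θ) = Ω_w(prox_{θΩ_w}(v)) − ε is continuous and monotonically decreasing on [0, Ω_w*(v)], with g(0) > 0 and g(θ) = −ε < 0 for θ ≥ Ω_w*(v); consequently g has a unique root in (0, Ω_w*(v)). -/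
/-!
For a seminorm `Ω` on a real inner product space, let `p θ` minimise `½‖x - v‖² + θ Ω x`.
Midpoint convexity and the parallelogram law make this objective `¼`-strongly convex around
`p θ`, and adding the two resulting inequalities for `θ` and `θ'` gives
`½‖p θ - p θ'‖² ≤ (θ' - θ) (Ω (p θ) - Ω (p θ'))`.
This single inequality makes `θ ↦ Ω (p θ)` antitone and Lipschitz, and forces `p θ = p θ'` when
the two values of `Ω` agree. Optimality along the ray through `p θ` gives
`⟪p θ, p θ - v⟫ + θ Ω (p θ) = 0`, so `θ` is determined by `p θ` as soon as `Ω (p θ) ≠ 0`: the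
root is unique. Finally `p 0 = v`, while for `θ ≥ Ω*(v)` comparing with `x = 0` gives `p θ = 0`,
and the intermediate value theorem produces the root.
-/

open Finset

theorem eq_zero_of_forall_mul_add_sq_mul_nonneg {a b : ℝ} (hb : 0 ≤ b)
    (h : ∀ s ∈ Set.Icc (-1 : ℝ) 1, 0 ≤ s * a + s ^ 2 * b) : a = 0 := by
  have hM : 0 < |a| + b + 1 := by positivity
  have hs : -a / (|a| + b + 1) ∈ Set.Icc (-1 : ℝ) 1 := by
    rw [Set.mem_Icc, le_div_iff₀ hM, div_le_iff₀ hM]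
    constructor <;> linarith [neg_abs_le a, le_abs_self a]
  have key : -a / (|a| + b + 1) * a + (-a / (|a| + b + 1)) ^ 2 * b =
      -(a ^ 2 * (|a| + 1)) / (|a| + b + 1) ^ 2 := by
    field_simp
    ring
  have := h _ hs
  rw [key, le_div_iff₀ (by positivity), zero_mul, neg_nonneg] at this
  nlinarith [abs_nonneg a, sq_nonneg a]

theorem eq_zero_of_norm_sq_nonpos {F : Type*} [NormedAddCommGroup F] {x : F}
    (h : ‖x‖ ^ 2 ≤ 0) : x = 0 :=
  norm_eq_zero.1 ((sq_nonpos_iff _).1 h)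

namespace Seminorm

variable {E : Type*} [NormedAddCommGroup E] [InnerProductSpace ℝ E]
  (Ω : Seminorm ℝ E) (v : E)

def IsProx (θ : ℝ) (p : E) : Prop :=
  ∀ x, ‖p - v‖ ^ 2 / 2 + θ * Ω p ≤ ‖x - v‖ ^ 2 / 2 + θ * Ω x

noncomputable def dualNorm : ℝ :=
  sSup {y | ∃ u, Ω u ≤ 1 ∧ y = inner ℝ u v}

variable {Ω v} {θ θ' : ℝ} {p q : E}

theorem bddAbove_inner {c : ℝ} (hc : 0 < c) (hΩ : ∀ x, c * ‖x‖ ≤ Ω x) :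
    BddAbove {y | ∃ u, Ω u ≤ 1 ∧ y = inner ℝ u v} := by
  refine ⟨‖v‖ / c, ?_⟩
  rintro _ ⟨u, hu, rfl⟩
  have : ‖u‖ ≤ 1 / c := by rw [le_div_iff₀ hc]; linarith [hΩ u]
  calc inner ℝ u v ≤ ‖u‖ * ‖v‖ := real_inner_le_norm u v
    _ ≤ 1 / c * ‖v‖ := by gcongr
    _ = ‖v‖ / c := by ring

theorem dualNorm_nonneg {c : ℝ} (hc : 0 < c) (hΩ : ∀ x, c * ‖x‖ ≤ Ω x) :
    0 ≤ Ω.dualNorm v :=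
  le_csSup (bddAbove_inner hc hΩ) ⟨0, by simp, by simp⟩

theorem inner_le_dualNorm_mul {c : ℝ} (hc : 0 < c) (hΩ : ∀ x, c * ‖x‖ ≤ Ω x) (x : E) :
    inner ℝ x v ≤ Ω.dualNorm v * Ω x := by
  obtain h₀ | hpos := (apply_nonneg Ω x).eq_or_lt
  · have : x = 0 := norm_eq_zero.1 <| le_antisymm
      (nonpos_of_mul_nonpos_right (by linarith [hΩ x]) hc) (norm_nonneg x)
    simp [this]
  · have hu : Ω ((Ω x)⁻¹ • x) ≤ 1 := by
      rw [map_smul_eq_mul, Real.norm_of_nonneg (inv_nonneg.2 hpos.le), inv_mul_cancel₀ hpos.ne']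
    have : inner ℝ ((Ω x)⁻¹ • x) v ≤ Ω.dualNorm v :=
      le_csSup (bddAbove_inner hc hΩ) ⟨_, hu, rfl⟩
    rw [real_inner_smul_left, inv_mul_le_iff₀ hpos] at this
    simpa [mul_comm] using this

namespace IsProx

theorem eq_of_zero (hp : Ω.IsProx v 0 p) : p = v := by
  have h := hp v
  simp only [sub_self, norm_zero, zero_mul, add_zero] at h
  exact sub_eq_zero.1 (eq_zero_of_norm_sq_nonpos (by linarith))

theorem add_norm_sub_sq_le (hθ : 0 ≤ θ) (hp : Ω.IsProx v θ p) (x : E) :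
    ‖p - v‖ ^ 2 / 2 + θ * Ω p + ‖x - p‖ ^ 2 / 4 ≤ ‖x - v‖ ^ 2 / 2 + θ * Ω x := by
  have hmid := hp ((2⁻¹ : ℝ) • (x + p))
  have hconv : Ω ((2⁻¹ : ℝ) • (x + p)) ≤ (Ω x + Ω p) / 2 := by
    rw [map_smul_eq_mul, Real.norm_of_nonneg (by norm_num)]
    linarith [map_add_le_add Ω x p]
  have hpar : ‖(2⁻¹ : ℝ) • (x + p) - v‖ ^ 2 =
      (‖x - v‖ ^ 2 + ‖p - v‖ ^ 2) / 2 - ‖x - p‖ ^ 2 / 4 := by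
    have h := parallelogram_law_with_norm ℝ (x - v) (p - v)
    have h₁ : (2⁻¹ : ℝ) • (x + p) - v = (2⁻¹ : ℝ) • ((x - v) + (p - v)) := by module
    rw [h₁, norm_smul, mul_pow, Real.norm_of_nonneg (by norm_num)]
    rw [sub_sub_sub_cancel_right] at h
    linarith
  nlinarith [mul_le_mul_of_nonneg_left hconv hθ]

theorem norm_sub_sq_le (hθ : 0 ≤ θ) (hθ' : 0 ≤ θ') (hp : Ω.IsProx v θ p)
    (hq : Ω.IsProx v θ' q) : ‖p - q‖ ^ 2 / 2 ≤ (θ' - θ) * (Ω p - Ω q) := by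
  have h₁ := hp.add_norm_sub_sq_le hθ q
  have h₂ := hq.add_norm_sub_sq_le hθ' p
  rw [norm_sub_rev q p] at h₁
  linarith

theorem inner_add_mul_eq_zero (hp : Ω.IsProx v θ p) :
    inner ℝ p (p - v) + θ * Ω p = 0 := by
  refine eq_zero_of_forall_mul_add_sq_mul_nonneg (b := ‖p‖ ^ 2 / 2) (by positivity)
    fun s hs => ?_
  have h := hp ((1 + s) • p)
  have h₁ : (1 + s) • p - v = (p - v) + s • p := by module
  rw [map_smul_eq_mul, Real.norm_of_nonneg (by linarith [hs.1]), h₁, norm_add_sq_real,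
    inner_smul_right, norm_smul, mul_pow, Real.norm_eq_abs, sq_abs, real_inner_comm] at h
  nlinarith

theorem param_eq_of_map_eq (hθ : 0 ≤ θ) (hθ' : 0 ≤ θ') (hp : Ω.IsProx v θ p)
    (hq : Ω.IsProx v θ' q) (h : Ω p = Ω q) (h₀ : Ω p ≠ 0) : θ = θ' := by
  obtain rfl : p = q := by
    have := hp.norm_sub_sq_le hθ hθ' hq
    rw [h, sub_self, mul_zero] at this
    exact sub_eq_zero.1 (eq_zero_of_norm_sq_nonpos (by linarith))
  have := hp.inner_add_mul_eq_zero
  have := hq.inner_add_mul_eq_zero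
  exact mul_right_cancel₀ h₀ (by linarith)

theorem eq_zero_of_inner_le (hp : Ω.IsProx v θ p) (h : ∀ x, inner ℝ x v ≤ θ * Ω x) :
    p = 0 := by
  have h₀ := hp 0
  rw [zero_sub, norm_neg, map_zero, mul_zero, add_zero, norm_sub_sq_real] at h₀
  exact eq_zero_of_norm_sq_nonpos (by linarith [h p])

theorem abs_sub_map_le {C : ℝ} (hC : ∀ x, Ω x ≤ C * ‖x‖) (hθ : 0 ≤ θ) (hθ' : 0 ≤ θ')
    (hp : Ω.IsProx v θ p) (hq : Ω.IsProx v θ' q) :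
    |Ω p - Ω q| ≤ 2 * C ^ 2 * |θ - θ'| := by
  set e := |Ω p - Ω q|
  have he : e ≤ C * ‖p - q‖ := (abs_sub_map_le_sub Ω p q).trans (hC _)
  have hd : ‖p - q‖ ^ 2 ≤ 2 * |θ - θ'| * e := by
    have h := hp.norm_sub_sq_le hθ hθ' hq
    have : (θ' - θ) * (Ω p - Ω q) ≤ |θ - θ'| * e := by
      rw [abs_sub_comm θ, ← abs_mul]; exact le_abs_self _
    linarith
  have : e * e ≤ 2 * C ^ 2 * |θ - θ'| * e := by
    calc e * e ≤ (C * ‖p - q‖) ^ 2 := by rw [← sq]; gcongr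
      _ = C ^ 2 * ‖p - q‖ ^ 2 := by ring
      _ ≤ C ^ 2 * (2 * |θ - θ'| * e) := by gcongr
      _ = 2 * C ^ 2 * |θ - θ'| * e := by ring
  obtain h₀ | h₀ := (show 0 ≤ e from abs_nonneg _).eq_or_lt
  · rw [← h₀]; positivity
  · exact le_of_mul_le_mul_right this h₀

theorem eq_zero_of_dualNorm_le {c : ℝ} (hc : 0 < c) (hΩ : ∀ x, c * ‖x‖ ≤ Ω x)
    (hp : Ω.IsProx v θ p) (hθ : Ω.dualNorm v ≤ θ) : p = 0 :=
  hp.eq_zero_of_inner_le fun x => (inner_le_dualNorm_mul hc hΩ x).trans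
    (mul_le_mul_of_nonneg_right hθ (apply_nonneg Ω x))

end IsProx

section Path

variable {P : ℝ → E} (hP : ∀ θ, 0 ≤ θ → Ω.IsProx v θ (P θ))
include hP

theorem antitoneOn_map_prox : AntitoneOn (fun θ => Ω (P θ)) (Set.Ici 0) := by
  intro θ hθ θ' hθ' hle
  obtain rfl | hlt := hle.eq_or_lt
  · exact le_rfl
  have h := (hP θ hθ).norm_sub_sq_le hθ hθ' (hP θ' hθ')
  have : 0 ≤ (θ' - θ) * (Ω (P θ) - Ω (P θ')) :=
    (div_nonneg (sq_nonneg _) zero_le_two).trans h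
  simpa using nonneg_of_mul_nonneg_right this (sub_pos.2 hlt)

theorem continuousOn_map_prox {C : ℝ} (hC : ∀ x, Ω x ≤ C * ‖x‖) :
    ContinuousOn (fun θ => Ω (P θ)) (Set.Ici 0) :=
  (LipschitzOnWith.of_dist_le' (K := 2 * C ^ 2) fun θ hθ θ' hθ' =>
    (hP θ hθ).abs_sub_map_le hC hθ hθ' (hP θ' hθ')).continuousOn

end Path

theorem prox_root_finding {c C ε : ℝ} (hc : 0 < c) (hΩ : ∀ x, c * ‖x‖ ≤ Ω x)
    (hC : ∀ x, Ω x ≤ C * ‖x‖) (hε : 0 < ε) (hv : ε < Ω v) {P : ℝ → E}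
    (hP : ∀ θ, 0 ≤ θ → Ω.IsProx v θ (P θ)) :
    ContinuousOn (fun θ => Ω (P θ) - ε) (Set.Icc 0 (Ω.dualNorm v)) ∧
      AntitoneOn (fun θ => Ω (P θ) - ε) (Set.Icc 0 (Ω.dualNorm v)) ∧
      0 < Ω (P 0) - ε ∧ (∀ θ, Ω.dualNorm v ≤ θ → Ω (P θ) - ε = -ε) ∧
      ∃! θ, θ ∈ Set.Ioo 0 (Ω.dualNorm v) ∧ Ω (P θ) - ε = 0 := by
  have hD : 0 ≤ Ω.dualNorm v := dualNorm_nonneg hc hΩ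
  have hcont : ContinuousOn (fun θ => Ω (P θ) - ε) (Set.Icc 0 (Ω.dualNorm v)) :=
    ((continuousOn_map_prox hP hC).sub continuousOn_const).mono Set.Icc_subset_Ici_self
  have hpos : 0 < Ω (P 0) - ε := by rw [(hP 0 le_rfl).eq_of_zero]; linarith
  have hlarge : ∀ θ, Ω.dualNorm v ≤ θ → Ω (P θ) - ε = -ε := fun θ hθ => by
    rw [(hP θ (hD.trans hθ)).eq_zero_of_dualNorm_le hc hΩ hθ, map_zero, zero_sub]
  refine ⟨hcont, fun θ hθ θ' hθ' h => sub_le_sub_right (antitoneOn_map_prox hP hθ.1 hθ'.1 h) ε,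
    hpos, hlarge, ?_⟩
  obtain ⟨θ, hθ, hroot⟩ :=
    intermediate_value_Ioo' hD hcont ⟨by rw [hlarge _ le_rfl]; linarith, hpos⟩
  refine ⟨θ, ⟨hθ, hroot⟩, fun θ' ⟨hθ', hroot'⟩ => ?_⟩
  exact (hP θ' hθ'.1.le).param_eq_of_map_eq hθ'.1.le hθ.1.le (hP θ hθ.1.le) (by linarith)
    (by linarith)

end Seminorm

section OWL

variable {n : ℕ} {w : Fin n → ℝ}

theorem sum_mul_abs_comp_perm_le_owl (hw : Antitone w) (x : Fin n → ℝ)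
    (σ : Equiv.Perm (Fin n)) : ∑ i, w i * |x (σ i)| ≤ owl w x := by
  set τ := Tuple.sort (fun j => -|x j|)
  have hsorted : Antitone (fun i => |x (τ i)|) := fun i j hij => by
    simpa using Tuple.monotone_sort (fun j => -|x j|) hij
  calc ∑ i, w i * |x (σ i)| = ∑ i, w i * |x (τ ((τ⁻¹ * σ) i))| := by simp
    _ ≤ ∑ i, w i * |x (τ i)| := (hw.monovary hsorted).sum_mul_comp_perm_le_sum_mul
    _ = owl w x := rfl

theorem owl_zero : owl w 0 = 0 := by
  simp [owl, absSorted]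

theorem owl_add_le (hw : Antitone w) (hw₀ : ∀ i, 0 ≤ w i) (x y : Fin n → ℝ) :
    owl w (x + y) ≤ owl w x + owl w y := by
  set τ := Tuple.sort (fun j => -|(x + y) j|)
  calc owl w (x + y) = ∑ i, w i * |(x + y) (τ i)| := rfl
    _ ≤ ∑ i, (w i * |x (τ i)| + w i * |y (τ i)|) := by
        gcongr with i
        rw [← mul_add]
        exact mul_le_mul_of_nonneg_left (abs_add_le _ _) (hw₀ i)
    _ ≤ owl w x + owl w y := by
        rw [sum_add_distrib]
        exact add_le_add (sum_mul_abs_comp_perm_le_owl hw x τ)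
          (sum_mul_abs_comp_perm_le_owl hw y τ)

theorem owl_smul_le (hw : Antitone w) (c : ℝ) (x : Fin n → ℝ) :
    owl w (c • x) ≤ |c| * owl w x := by
  set τ := Tuple.sort (fun j => -|(c • x) j|)
  calc owl w (c • x) = ∑ i, w i * |(c • x) (τ i)| := rfl
    _ = |c| * ∑ i, w i * |x (τ i)| := by
        rw [mul_sum]
        refine sum_congr rfl fun i _ => ?_
        rw [Pi.smul_apply, smul_eq_mul, abs_mul]
        ring
    _ ≤ |c| * owl w x := by
        gcongr
        exact sum_mul_abs_comp_perm_le_owl hw x τ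

theorem mul_abs_le_owl (hw : Antitone w) (hw₀ : ∀ i, 0 ≤ w i) (x : Fin n → ℝ) (i j : Fin n) :
    w j * |x i| ≤ owl w x :=
  calc w j * |x i| = w j * |x (Equiv.swap j i j)| := by rw [Equiv.swap_apply_left]
    _ ≤ ∑ k, w k * |x (Equiv.swap j i k)| :=
        single_le_sum (f := fun k => w k * |x (Equiv.swap j i k)|)
          (fun k _ => mul_nonneg (hw₀ k) (abs_nonneg _)) (mem_univ j)
    _ ≤ owl w x := sum_mul_abs_comp_perm_le_owl hw x _

noncomputable def owlSeminorm (hw : Antitone w) (hw₀ : ∀ i, 0 ≤ w i) :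
    Seminorm ℝ (EuclideanSpace ℝ (Fin n)) :=
  Seminorm.ofSMulLE (fun x => owl w x.ofLp) owl_zero
    (fun x y => owl_add_le hw hw₀ x.ofLp y.ofLp) (fun c x => owl_smul_le hw c x.ofLp)

variable (hw : Antitone w) (hw₀ : ∀ i, 0 ≤ w i)

theorem owlSeminorm_apply (x : EuclideanSpace ℝ (Fin n)) :
    owlSeminorm hw hw₀ x = owl w x.ofLp := rfl

theorem owlSeminorm_le (x : EuclideanSpace ℝ (Fin n)) :
    owlSeminorm hw hw₀ x ≤ (∑ i, w i) * ‖x‖ := by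
  rw [owlSeminorm_apply, owl, sum_mul]
  gcongr with i _
  · exact hw₀ i
  · simpa [absSorted] using PiLp.norm_apply_le x _

theorem div_sqrt_mul_norm_le_owlSeminorm (j : Fin n) (x : EuclideanSpace ℝ (Fin n)) :
    w j / √n * ‖x‖ ≤ owlSeminorm hw hw₀ x := by
  have hn : (0 : ℝ) < √n := Real.sqrt_pos.2 (Nat.cast_pos.2 j.pos)
  have hΩ : 0 ≤ owlSeminorm hw hw₀ x := apply_nonneg _ x
  rw [div_mul_eq_mul_div, div_le_iff₀ hn,
    ← sq_le_sq₀ (mul_nonneg (hw₀ j) (norm_nonneg x)) (by positivity), mul_pow, mul_pow,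
    Real.sq_sqrt (Nat.cast_nonneg n), EuclideanSpace.real_norm_sq_eq, mul_sum]
  calc ∑ i, w j ^ 2 * x i ^ 2 = ∑ i, (w j * |x i|) ^ 2 := by simp [mul_pow]
    _ ≤ ∑ _i : Fin n, owlSeminorm hw hw₀ x ^ 2 := by
        gcongr with i
        · exact mul_nonneg (hw₀ j) (abs_nonneg _)
        · exact mul_abs_le_owl hw hw₀ x.ofLp i j
    _ = owlSeminorm hw hw₀ x ^ 2 * n := by simp [mul_comm]

end OWL

/-- For Omega_w(v) > ε, the function g(θ) = Omega_w(prox_{θΩ_w}(v)) − ε is continuous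
and decreasing on [0, Omega_w*(v)], with g(0) > 0 and g(θ) = −ε for θ ≥ Omega_w*(v);
hence g has a unique root in (0, Omega_w*(v)). Here P θ denotes prox_{θΩ_w}(v) and D
denotes the dual norm Omega_w*(v). -/
theorem owl_proj_root_finding {n : ℕ} (w : Fin n → ℝ) (hmono : Antitone w)
    (hnonneg : ∀ i, 0 ≤ w i) (hne : w ≠ 0) (ε : ℝ) (hε : 0 < ε)
    (v : Fin n → ℝ) (hv : owl w v > ε)
    (P : ℝ → Fin n → ℝ)
    (hP : ∀ θ : ℝ, 0 ≤ θ → ∀ x : Fin n → ℝ,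
      (1 / 2) * ∑ i, (P θ i - v i) ^ 2 + θ * owl w (P θ) ≤
        (1 / 2) * ∑ i, (x i - v i) ^ 2 + θ * owl w x)
    (D : ℝ)
    (hD : D = sSup {y : ℝ | ∃ u : Fin n → ℝ, owl w u ≤ 1 ∧ y = ∑ i, u i * v i})
    (g : ℝ → ℝ) (hg : g = fun θ => owl w (P θ) - ε) :
    ContinuousOn g (Set.Icc 0 D) ∧ AntitoneOn g (Set.Icc 0 D) ∧
      0 < g 0 ∧ (∀ θ : ℝ, D ≤ θ → g θ = -ε) ∧
      ∃! θ : ℝ, θ ∈ Set.Ioo 0 D ∧ g θ = 0 := by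
  obtain ⟨j, hj⟩ : ∃ j, 0 < w j := by
    obtain ⟨j, hj⟩ := Function.ne_iff.1 hne
    exact ⟨j, (hnonneg j).lt_of_ne' hj⟩
  have hdual : D = (owlSeminorm hmono hnonneg).dualNorm (WithLp.toLp 2 v) := by
    rw [hD, Seminorm.dualNorm]
    congr 1
    ext y
    constructor
    · rintro ⟨u, hu, rfl⟩
      exact ⟨WithLp.toLp 2 u, hu, by simp [PiLp.inner_apply, mul_comm]⟩
    · rintro ⟨u, hu, rfl⟩
      exact ⟨u.ofLp, hu, by simp [PiLp.inner_apply, mul_comm]⟩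
  have hprox : ∀ θ, 0 ≤ θ →
      (owlSeminorm hmono hnonneg).IsProx (WithLp.toLp 2 v) θ (WithLp.toLp 2 (P θ)) :=
    fun θ hθ x => by
      simpa [owlSeminorm_apply, EuclideanSpace.real_norm_sq_eq, div_eq_inv_mul] using
        hP θ hθ x.ofLp
  subst hg hdual
  exact Seminorm.prox_root_finding (div_pos hj (Real.sqrt_pos.2 (Nat.cast_pos.2 j.pos)))
    (div_sqrt_mul_norm_le_owlSeminorm hmono hnonneg j) (owlSeminorm_le hmono hnonneg) hε hv hprox
end
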